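/- Let f : {0,1}ⁿ → ℝ satisfy condition (2.1) with constant v > 0, and for each integer k set q_k = P{f(X) ∈ [k, k+1)}. Then q_{k+1} ≤ q_k for every integer k ≥ E f(X) + (25/√5)·v. -/

import Mathlib

/-!
Tensorizing entropy over the coordinates of the cube and bounding each two-point entropy by a
squared difference gives a logarithmic Sobolev inequality controlled by the positive parts
`(h x - h x^{(i)})₊`. Applied to `e^{λ f}`, Herbst's argument turns it into the sub-Gaussian tail
`P{f ≥ E f + s} ≤ e^{-s²/4v}`. Applied to the square of the clamp `min (max (f - k) 0) 1`, which
is `1` on `{f ≥ k + 1}` and vanishes off `{f > k}`, it gives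
`P{f ≥ k + 1} · log (1 / P{f > k}) ≤ (2v + e⁻¹) · P{f > k}`.
Beyond `E f + (25/√5) v`, either `v ≤ 1/30` and `P{f ≥ k} ≥ v`, and then the tail bound gives
`P{f ≥ k + 1} ≤ e^{-1/4v} ≤ v/2`, or `P{f > k} ≤ e^{-2(2v + e⁻¹)}` and the second bound applies.
Either way `2 P{f ≥ k + 1} ≤ P{f ≥ k}`, that is `q_{k+1} ≤ P{f ≥ k + 1} ≤ q_k`.
-/

open scoped Classical
open Finset

/-- Probability of an event under the uniform distribution on `{0,1}ⁿ`. -/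
noncomputable def prb {n : ℕ} (P : (Fin n → Fin 2) → Prop) : ℝ :=
  ((Finset.univ.filter P).card : ℝ) / 2 ^ n

/-- `x^{(i)}`: flip the `i`-th bit of `x`. -/
noncomputable def flipBit {n : ℕ} (x : Fin n → Fin 2) (i : Fin n) : Fin n → Fin 2 :=
  Function.update x i (x i + 1)

/-- The `α`-quantile `Q_α = inf { z : P{f(X) ≤ z} ≥ α }`. -/
noncomputable def quant {n : ℕ} (f : (Fin n → Fin 2) → ℝ) (α : ℝ) : ℝ :=
  sInf {z : ℝ | α ≤ prb fun x => f x ≤ z}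

/-- Expectation of `f(X)` for `X` uniform on `{0,1}ⁿ`. -/
noncomputable def expecb {n : ℕ} (f : (Fin n → Fin 2) → ℝ) : ℝ :=
  (∑ x, f x) / 2 ^ n

/-- Variance of `f(X)` for `X` uniform on `{0,1}ⁿ`. -/
noncomputable def varb {n : ℕ} (f : (Fin n → Fin 2) → ℝ) : ℝ :=
  expecb fun x => (f x - expecb f) ^ 2

open Real

section Cube

variable {n : ℕ}

lemma expecb_add (F G : (Fin n → Fin 2) → ℝ) :
    expecb (fun x => F x + G x) = expecb F + expecb G := by
  simp only [expecb, Finset.sum_add_distrib, add_div]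

lemma expecb_const_mul (c : ℝ) (F : (Fin n → Fin 2) → ℝ) :
    expecb (fun x => c * F x) = c * expecb F := by
  simp only [expecb, ← Finset.mul_sum, mul_div_assoc]

lemma expecb_const (c : ℝ) : expecb (fun _ : Fin n → Fin 2 => c) = c := by
  simp [expecb, Finset.card_univ]

lemma expecb_mono {F G : (Fin n → Fin 2) → ℝ} (h : ∀ x, F x ≤ G x) : expecb F ≤ expecb G :=
  div_le_div_of_nonneg_right (Finset.sum_le_sum fun x _ => h x) (by positivity)

lemma expecb_pos {F : (Fin n → Fin 2) → ℝ} (h : ∀ x, 0 < F x) : 0 < expecb F :=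
  div_pos (Finset.sum_pos (fun x _ => h x) Finset.univ_nonempty) (by positivity)

lemma prb_eq_expecb (P : (Fin n → Fin 2) → Prop) :
    prb P = expecb fun x => if P x then 1 else 0 := by
  simp only [prb, expecb, Finset.sum_boole]

lemma prb_le_expecb {P : (Fin n → Fin 2) → Prop} {F : (Fin n → Fin 2) → ℝ}
    (hF : ∀ x, 0 ≤ F x) (hP : ∀ x, P x → 1 ≤ F x) : prb P ≤ expecb F := by
  rw [prb_eq_expecb]
  refine expecb_mono fun x => ?_
  split_ifs with h
  exacts [hP x h, hF x]

lemma prb_mono {P Q : (Fin n → Fin 2) → Prop} (h : ∀ x, P x → Q x) : prb P ≤ prb Q := by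
  rw [prb_eq_expecb Q]
  exact prb_le_expecb (fun x => by split_ifs <;> norm_num) fun x hx => by simp [h x hx]

lemma prb_le_one (P : (Fin n → Fin 2) → Prop) : prb P ≤ 1 := by
  simpa [expecb_const] using prb_le_expecb (F := fun _ => (1 : ℝ)) (P := P) (by simp) (by simp)

lemma prb_sub_prb_of_imp {P Q : (Fin n → Fin 2) → Prop} (h : ∀ x, Q x → P x) :
    prb P - prb Q = prb fun x => P x ∧ ¬Q x := by
  rw [sub_eq_iff_eq_add, prb_eq_expecb, prb_eq_expecb, prb_eq_expecb, ← expecb_add]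
  congr 1
  funext x
  by_cases hQ : Q x
  · simp [hQ, h x hQ]
  · simp [hQ]

lemma expecb_succ (F : (Fin (n + 1) → Fin 2) → ℝ) :
    expecb F = expecb fun y => (F (Fin.cons 0 y) + F (Fin.cons 1 y)) / 2 := by
  have hsum : ∑ x, F x = ∑ y : Fin n → Fin 2, (F (Fin.cons 0 y) + F (Fin.cons 1 y)) := by
    rw [← (Fin.consEquiv fun _ => Fin 2).sum_comp, Fintype.sum_prod_type, Fin.sum_univ_two,
      ← Finset.sum_add_distrib]
    rfl
  simp only [expecb, hsum, ← Finset.sum_div, div_div, pow_succ']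

lemma flipBit_flipBit (x : Fin n → Fin 2) (i : Fin n) : flipBit (flipBit x i) i = x := by
  have h2 : ∀ a : Fin 2, a + 1 + 1 = a := by decide
  simp [flipBit, h2]

lemma flipBit_cons_zero (c : Fin 2) (y : Fin n → Fin 2) :
    flipBit (Fin.cons c y) 0 = Fin.cons (c + 1) y := by
  simp [flipBit, Fin.update_cons_zero]

lemma flipBit_cons_succ (c : Fin 2) (y : Fin n → Fin 2) (i : Fin n) :
    flipBit (Fin.cons c y) i.succ = Fin.cons c (flipBit y i) := by
  simp [flipBit, Fin.cons_update]

lemma expecb_sum_flipBit_swap (G : (Fin n → Fin 2) → (Fin n → Fin 2) → ℝ) :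
    expecb (fun x => ∑ i, G (flipBit x i) x) = expecb fun x => ∑ i, G x (flipBit x i) := by
  have hflip (i : Fin n) : Function.Involutive fun x => flipBit x i := fun x => flipBit_flipBit x i
  simp only [expecb]
  rw [Finset.sum_comm, Finset.sum_comm (f := fun x i => G x (flipBit x i))]
  congr 1
  refine Finset.sum_congr rfl fun i _ => ?_
  exact Fintype.sum_bijective _ (hflip i).bijective _ _ fun x => by rw [flipBit_flipBit]

end Cube

section PairEntropy

/-- `pairEnt (h x) (h (flipBit x i))` is the entropy of `h` in the `i`-th coordinate at `x`. -/
noncomputable def pairEnt (u w : ℝ) : ℝ :=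
  (u * log u + w * log w) / 2 - (u + w) / 2 * log ((u + w) / 2)

lemma pairEnt_comm (u w : ℝ) : pairEnt u w = pairEnt w u := by
  simp only [pairEnt, add_comm]

lemma mul_log_div_eq {a b : ℝ} (hb : b = 0 → a = 0) : a * log (a / b) = a * (log a - log b) := by
  rcases eq_or_ne a 0 with rfl | ha
  · simp
  · rw [log_div ha fun h => ha (hb h)]

lemma two_mul_pairEnt {u w : ℝ} (hu : 0 ≤ u) (hw : 0 ≤ w) :
    2 * pairEnt u w = u * log (u / ((u + w) / 2)) + w * log (w / ((u + w) / 2)) := by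
  rw [mul_log_div_eq fun h => by linarith, mul_log_div_eq fun h => by linarith, pairEnt]
  ring

lemma pairEnt_half {u w : ℝ} (hu : 0 ≤ u) (hw : 0 ≤ w) :
    pairEnt (u / 2) (w / 2) = pairEnt u w / 2 := by
  have h := two_mul_pairEnt hu hw
  have h' := two_mul_pairEnt (div_nonneg hu zero_le_two) (div_nonneg hw zero_le_two)
  have e (a : ℝ) : a / 2 / ((u / 2 + w / 2) / 2) = a / ((u + w) / 2) := by
    rw [← add_div, div_div_div_cancel_right₀ two_ne_zero]
  rw [e, e] at h'
  linarith

/-- The log-sum inequality. -/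
lemma mul_log_div_add_le {a₀ a₁ b₀ b₁ : ℝ} (ha₀ : 0 ≤ a₀) (ha₁ : 0 ≤ a₁) (hb₀ : 0 < b₀)
    (hb₁ : 0 < b₁) :
    (a₀ + a₁) * log ((a₀ + a₁) / (b₀ + b₁)) ≤ a₀ * log (a₀ / b₀) + a₁ * log (a₁ / b₁) := by
  have hB : 0 < b₀ + b₁ := add_pos hb₀ hb₁
  have h := convexOn_mul_log.2 (Set.mem_Ici.2 (div_nonneg ha₀ hb₀.le))
    (Set.mem_Ici.2 (div_nonneg ha₁ hb₁.le)) (div_nonneg hb₀.le hB.le) (div_nonneg hb₁.le hB.le)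
    (by rw [← add_div, div_self hB.ne'] : b₀ / (b₀ + b₁) + b₁ / (b₀ + b₁) = 1)
  have e : b₀ / (b₀ + b₁) * (a₀ / b₀) + b₁ / (b₀ + b₁) * (a₁ / b₁) = (a₀ + a₁) / (b₀ + b₁) := by
    field_simp
  simp only [smul_eq_mul, e] at h
  have := hb₀.ne'
  have := hb₁.ne'
  calc (a₀ + a₁) * log ((a₀ + a₁) / (b₀ + b₁))
      = (b₀ + b₁) * ((a₀ + a₁) / (b₀ + b₁) * log ((a₀ + a₁) / (b₀ + b₁))) := by
        field_simp
    _ ≤ (b₀ + b₁) * (b₀ / (b₀ + b₁) * (a₀ / b₀ * log (a₀ / b₀)) +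
          b₁ / (b₀ + b₁) * (a₁ / b₁ * log (a₁ / b₁))) := mul_le_mul_of_nonneg_left h hB.le
    _ = a₀ * log (a₀ / b₀) + a₁ * log (a₁ / b₁) := by
        field_simp

lemma pairEnt_midpoint_le {u₀ u₁ w₀ w₁ : ℝ} (hu₀ : 0 ≤ u₀) (hu₁ : 0 ≤ u₁) (hw₀ : 0 ≤ w₀)
    (hw₁ : 0 ≤ w₁) :
    2 * pairEnt ((u₀ + u₁) / 2) ((w₀ + w₁) / 2) ≤ pairEnt u₀ w₀ + pairEnt u₁ w₁ := by
  have h00 : pairEnt 0 0 = 0 := by simp [pairEnt]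
  rcases (add_nonneg hu₀ hw₀).eq_or_lt with h₀ | h₀
  · obtain ⟨rfl, rfl⟩ : u₀ = 0 ∧ w₀ = 0 := ⟨by linarith, by linarith⟩
    rw [zero_add, zero_add, pairEnt_half hu₁ hw₁, h00]
    linarith
  rcases (add_nonneg hu₁ hw₁).eq_or_lt with h₁ | h₁
  · obtain ⟨rfl, rfl⟩ : u₁ = 0 ∧ w₁ = 0 := ⟨by linarith, by linarith⟩
    rw [add_zero, add_zero, pairEnt_half hu₀ hw₀, h00]
    linarith
  have hu := mul_log_div_add_le hu₀ hu₁ (half_pos h₀) (half_pos h₁)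
  have hw := mul_log_div_add_le hw₀ hw₁ (half_pos h₀) (half_pos h₁)
  have e := two_mul_pairEnt (u := (u₀ + u₁) / 2) (w := (w₀ + w₁) / 2) (by positivity)
    (by positivity)
  rw [show ((u₀ + u₁) / 2 + (w₀ + w₁) / 2) / 2 = ((u₀ + w₀) / 2 + (u₁ + w₁) / 2) / 2 by ring,
    div_div_div_cancel_right₀ two_ne_zero, div_div_div_cancel_right₀ two_ne_zero] at e
  linarith [two_mul_pairEnt hu₀ hw₀, two_mul_pairEnt hu₁ hw₁]

lemma pairEnt_le_sq_div {u w : ℝ} (hu : 0 ≤ u) (hw : 0 ≤ w) :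
    pairEnt u w ≤ (u - w) ^ 2 / (2 * (u + w)) := by
  rcases (add_nonneg hu hw).eq_or_lt with h | h
  · obtain ⟨rfl, rfl⟩ : u = 0 ∧ w = 0 := ⟨by linarith, by linarith⟩
    simp [pairEnt]
  have hm : 0 < (u + w) / 2 := half_pos h
  have hlog {a : ℝ} (ha : 0 ≤ a) : a * log (a / ((u + w) / 2)) ≤ a * (a / ((u + w) / 2) - 1) := by
    rcases ha.eq_or_lt with rfl | ha
    · simp
    · exact mul_le_mul_of_nonneg_left (log_le_sub_one_of_pos (by positivity)) ha.le
  have e : u * (u / ((u + w) / 2) - 1) + w * (w / ((u + w) / 2) - 1) = (u - w) ^ 2 / (u + w) := by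
    field_simp
    ring
  have h2 : (u - w) ^ 2 / (2 * (u + w)) = (u - w) ^ 2 / (u + w) / 2 := by
    rw [div_div, mul_comm]
  linarith [two_mul_pairEnt hu hw, hlog hu, hlog hw]

lemma pairEnt_sq_le (p q : ℝ) : pairEnt (p ^ 2) (q ^ 2) ≤ (p - q) ^ 2 := by
  refine (pairEnt_le_sq_div (sq_nonneg p) (sq_nonneg q)).trans ?_
  rcases (add_nonneg (sq_nonneg p) (sq_nonneg q)).eq_or_lt with h | h
  · rw [← h, mul_zero, div_zero]
    exact sq_nonneg _
  rw [div_le_iff₀ (by positivity)]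
  have e : (p ^ 2 - q ^ 2) ^ 2 = (p - q) ^ 2 * (p + q) ^ 2 := by ring
  rw [e]
  exact mul_le_mul_of_nonneg_left (by nlinarith [sq_nonneg (p - q)]) (sq_nonneg _)

lemma pairEnt_exp_le {p q : ℝ} (hqp : q ≤ p) :
    pairEnt (exp p) (exp q) ≤ (p - q) ^ 2 / 2 * exp p := by
  refine (pairEnt_le_sq_div (exp_pos p).le (exp_pos q).le).trans ?_
  have hgap : exp p - exp q ≤ (p - q) * exp p := by
    have h := add_one_le_exp (q - p)
    rw [exp_sub] at h
    have := (le_div_iff₀ (exp_pos p)).1 h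
    nlinarith
  have hgap0 : 0 ≤ exp p - exp q := by linarith [exp_le_exp.2 hqp]
  rw [div_le_iff₀ (by positivity)]
  calc (exp p - exp q) ^ 2 ≤ ((p - q) * exp p) ^ 2 := pow_le_pow_left₀ hgap0 hgap 2
    _ ≤ (p - q) ^ 2 / 2 * exp p * (2 * (exp p + exp q)) := by
      nlinarith [exp_pos q, exp_pos p, sq_nonneg (p - q), mul_pos (exp_pos p) (exp_pos q)]

end PairEntropy

section Tensorization

variable {n : ℕ}

noncomputable def entb (h : (Fin n → Fin 2) → ℝ) : ℝ :=
  expecb (fun x => h x * log (h x)) - expecb h * log (expecb h)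

lemma entb_succ (h : (Fin (n + 1) → Fin 2) → ℝ) :
    entb h = expecb (fun y => pairEnt (h (Fin.cons 0 y)) (h (Fin.cons 1 y))) +
      entb fun y => (h (Fin.cons 0 y) + h (Fin.cons 1 y)) / 2 := by
  rw [entb, entb, expecb_succ h, expecb_succ fun x => h x * log (h x), add_sub_assoc',
    ← expecb_add]
  congr 2
  funext y
  rw [pairEnt]
  ring

lemma sum_pairEnt_flipBit_cons (h : (Fin (n + 1) → Fin 2) → ℝ) (c : Fin 2)
    (y : Fin n → Fin 2) :
    ∑ i, pairEnt (h (Fin.cons c y)) (h (flipBit (Fin.cons c y) i)) =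
      pairEnt (h (Fin.cons c y)) (h (Fin.cons (c + 1) y)) +
        ∑ j, pairEnt (h (Fin.cons c y)) (h (Fin.cons c (flipBit y j))) := by
  simp only [Fin.sum_univ_succ, flipBit_cons_zero, flipBit_cons_succ]

/-- Tensorization of entropy on the cube. -/
theorem entb_le_expecb_sum_pairEnt (h : (Fin n → Fin 2) → ℝ) (hh : ∀ x, 0 ≤ h x) :
    entb h ≤ expecb fun x => ∑ i, pairEnt (h x) (h (flipBit x i)) := by
  induction n with
  | zero => simp [entb, expecb]
  | succ n ih =>
    set h₀ : (Fin n → Fin 2) → ℝ := fun y => h (Fin.cons 0 y)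
    set h₁ : (Fin n → Fin 2) → ℝ := fun y => h (Fin.cons 1 y)
    have hmid := ih (fun y => (h₀ y + h₁ y) / 2) fun y => by
      have := hh (Fin.cons 0 y); have := hh (Fin.cons 1 y); positivity
    have hconv : (expecb fun y => ∑ j, pairEnt ((h₀ y + h₁ y) / 2)
          ((h₀ (flipBit y j) + h₁ (flipBit y j)) / 2)) ≤
        expecb fun y => (∑ j, pairEnt (h₀ y) (h₀ (flipBit y j)) +
          ∑ j, pairEnt (h₁ y) (h₁ (flipBit y j))) / 2 := by
      refine expecb_mono fun y => ?_
      rw [← Finset.sum_add_distrib, Finset.sum_div]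
      refine Finset.sum_le_sum fun j _ => ?_
      linarith [pairEnt_midpoint_le (hh (Fin.cons 0 y)) (hh (Fin.cons 1 y))
        (hh (Fin.cons 0 (flipBit y j))) (hh (Fin.cons 1 (flipBit y j)))]
    have hsplit : (expecb fun x => ∑ i, pairEnt (h x) (h (flipBit x i))) =
        (expecb fun y => pairEnt (h₀ y) (h₁ y)) +
          expecb fun y => (∑ j, pairEnt (h₀ y) (h₀ (flipBit y j)) +
            ∑ j, pairEnt (h₁ y) (h₁ (flipBit y j))) / 2 := by
      rw [expecb_succ, ← expecb_add]
      congr 1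
      funext y
      rw [sum_pairEnt_flipBit_cons, sum_pairEnt_flipBit_cons,
        show (0 : Fin 2) + 1 = 1 from rfl, show (1 : Fin 2) + 1 = 0 from rfl,
        pairEnt_comm (h (Fin.cons 1 y))]
      ring
    rw [entb_succ, hsplit]
    linarith

end Tensorization

section LogSobolev

variable {n : ℕ}

theorem entb_le_two_mul_expecb {h : (Fin n → Fin 2) → ℝ} (hh : ∀ x, 0 ≤ h x)
    {P : (Fin n → Fin 2) → (Fin n → Fin 2) → ℝ}
    (hP : ∀ x y, pairEnt (h x) (h y) ≤ P x y + P y x) :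
    entb h ≤ 2 * expecb fun x => ∑ i, P x (flipBit x i) :=
  calc entb h ≤ expecb fun x => ∑ i, pairEnt (h x) (h (flipBit x i)) :=
        entb_le_expecb_sum_pairEnt h hh
    _ ≤ expecb fun x => ∑ i, (P x (flipBit x i) + P (flipBit x i) x) :=
        expecb_mono fun x => Finset.sum_le_sum fun i _ => hP _ _
    _ = 2 * expecb fun x => ∑ i, P x (flipBit x i) := by
        simp only [Finset.sum_add_distrib]
        rw [expecb_add, expecb_sum_flipBit_swap]
        ring

lemma entb_exp_mul_le {f : (Fin n → Fin 2) → ℝ} {v : ℝ}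
    (hcond : ∀ x, ∑ i, (max (f x - f (flipBit x i)) 0) ^ 2 ≤ v) {t : ℝ} (ht : 0 ≤ t) :
    entb (fun x => exp (t * f x)) ≤ v * t ^ 2 * expecb fun x => exp (t * f x) := by
  set P : (Fin n → Fin 2) → (Fin n → Fin 2) → ℝ :=
    fun x y => t ^ 2 / 2 * exp (t * f x) * max (f x - f y) 0 ^ 2
  have hP0 (x y) : 0 ≤ P x y := by positivity
  have hPle (x y) (hxy : f y ≤ f x) : pairEnt (exp (t * f x)) (exp (t * f y)) ≤ P x y := by
    refine (pairEnt_exp_le (mul_le_mul_of_nonneg_left hxy ht)).trans_eq ?_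
    simp only [P, max_eq_left (sub_nonneg.2 hxy)]
    ring
  have hP (x y) : pairEnt (exp (t * f x)) (exp (t * f y)) ≤ P x y + P y x := by
    rcases le_total (f y) (f x) with hxy | hxy
    · linarith [hPle x y hxy, hP0 y x]
    · rw [pairEnt_comm]
      linarith [hPle y x hxy, hP0 x y]
  calc entb (fun x => exp (t * f x)) ≤ 2 * expecb fun x => ∑ i, P x (flipBit x i) :=
        entb_le_two_mul_expecb (fun x => (exp_pos _).le) hP
    _ ≤ 2 * expecb fun x => t ^ 2 / 2 * v * exp (t * f x) := by
        refine mul_le_mul_of_nonneg_left (expecb_mono fun x => ?_) zero_le_two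
        rw [← Finset.mul_sum, mul_right_comm]
        gcongr
        exact hcond x
    _ = v * t ^ 2 * expecb fun x => exp (t * f x) := by
        rw [expecb_const_mul]
        ring

lemma entb_sq_le (g : (Fin n → Fin 2) → ℝ) :
    entb (fun x => g x ^ 2) ≤ 2 * expecb fun x => ∑ i, max (g x - g (flipBit x i)) 0 ^ 2 := by
  refine entb_le_two_mul_expecb (P := fun x y => max (g x - g y) 0 ^ 2) (fun x => sq_nonneg _)
    fun x y => (pairEnt_sq_le _ _).trans_eq ?_
  rcases le_total (g x) (g y) with h | h
  · rw [max_eq_right (by linarith), max_eq_left (by linarith)]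
    ring
  · rw [max_eq_left (by linarith), max_eq_right (by linarith)]
    ring

end LogSobolev

section Herbst

/-- Herbst's argument: the differential inequality says that `t ↦ L t / t - c * t` is
antitone on `(0, ∞)`, and its limit at `0⁺` is `L' 0`. -/
theorem le_mul_deriv_zero_add_of_mul_deriv_sub_le {L L' : ℝ → ℝ} {c : ℝ}
    (hL : ∀ t, HasDerivAt L (L' t) t) (hL0 : L 0 = 0)
    (h : ∀ t, 0 < t → t * L' t - L t ≤ c * t ^ 2) {t : ℝ} (ht : 0 ≤ t) :
    L t ≤ t * L' 0 + c * t ^ 2 := by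
  rcases ht.eq_or_lt with rfl | ht
  · simp [hL0]
  set G : ℝ → ℝ := fun s => L s / s - c * s
  have hG (s : ℝ) (hs : s ≠ 0) : HasDerivAt G ((L' s * s - L s * 1) / s ^ 2 - c * 1) s :=
    ((hL s).div (hasDerivAt_id s) hs).sub ((hasDerivAt_id s).const_mul c)
  have hanti : AntitoneOn G (Set.Ioi 0) := by
    refine antitoneOn_of_deriv_nonpos (convex_Ioi 0)
      (fun s hs => (hG s (ne_of_gt hs)).continuousAt.continuousWithinAt) ?_ ?_
    · intro s hs
      rw [interior_Ioi] at hs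
      exact (hG s (ne_of_gt hs)).differentiableAt.differentiableWithinAt
    · intro s hs
      rw [interior_Ioi] at hs
      rw [(hG s (ne_of_gt hs)).deriv, sub_nonpos, mul_one, mul_one,
        div_le_iff₀ (pow_pos hs 2)]
      linarith [h s hs]
  have hlim : Filter.Tendsto G (nhdsWithin 0 (Set.Ioi 0)) (nhds (L' 0)) := by
    have hslope := (hL 0).tendsto_slope_zero_right
    have hct : Filter.Tendsto (fun s => c * s) (nhdsWithin 0 (Set.Ioi 0)) (nhds 0) :=
      ((continuous_const_mul c).tendsto' 0 0 (mul_zero c)).mono_left nhdsWithin_le_nhds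
    simpa [G, hL0, div_eq_inv_mul] using hslope.sub hct
  have hGt : G t ≤ L' 0 := ge_of_tendsto hlim <| by
    filter_upwards [Ioc_mem_nhdsGT ht] with s hs
    exact hanti hs.1 ht hs.2
  have := (div_le_iff₀ ht).1 (show L t / t ≤ L' 0 + c * t by simp only [G] at hGt; linarith)
  linarith

end Herbst

section Concentration

variable {n : ℕ}

lemma hasDerivAt_expecb_exp_mul (f : (Fin n → Fin 2) → ℝ) (t : ℝ) :
    HasDerivAt (fun s => expecb fun x => exp (s * f x))
      (expecb fun x => f x * exp (t * f x)) t := by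
  refine (HasDerivAt.fun_sum fun x _ => ?_).div_const _
  simpa [mul_comm] using ((hasDerivAt_mul_const (f x)).exp (x := t))

lemma log_expecb_exp_mul_le {f : (Fin n → Fin 2) → ℝ} {v : ℝ}
    (hcond : ∀ x, ∑ i, (max (f x - f (flipBit x i)) 0) ^ 2 ≤ v) {t : ℝ} (ht : 0 ≤ t) :
    log (expecb fun x => exp (t * f x)) ≤ t * expecb f + v * t ^ 2 := by
  set Z : ℝ → ℝ := fun s => expecb fun x => exp (s * f x)
  set Z' : ℝ → ℝ := fun s => expecb fun x => f x * exp (s * f x)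
  have hZ (s : ℝ) : 0 < Z s := expecb_pos fun x => exp_pos _
  have hZ0 : Z 0 = 1 := by simp [Z, expecb_const]
  have hZ'0 : Z' 0 = expecb f := by simp [Z']
  have hL (s : ℝ) : HasDerivAt (fun s => log (Z s)) (Z' s / Z s) s :=
    (hasDerivAt_expecb_exp_mul f s).log (hZ s).ne'
  have hent (s : ℝ) (hs : 0 < s) : s * (Z' s / Z s) - log (Z s) ≤ v * s ^ 2 := by
    have h := entb_exp_mul_le hcond hs.le
    have e : entb (fun x => exp (s * f x)) = s * Z' s - Z s * log (Z s) := by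
      simp only [entb, log_exp, Z, Z', ← expecb_const_mul]
      congr 2
      funext x
      ring
    rw [e] at h
    rw [mul_div_assoc', div_sub' (hZ s).ne', div_le_iff₀ (hZ s)]
    linarith
  have := le_mul_deriv_zero_add_of_mul_deriv_sub_le hL (by simp [hZ0]) hent ht
  simpa [hZ0, hZ'0] using this

lemma prb_ge_le_exp {f : (Fin n → Fin 2) → ℝ} {v : ℝ}
    (hcond : ∀ x, ∑ i, (max (f x - f (flipBit x i)) 0) ^ 2 ≤ v) (a : ℝ) {t : ℝ} (ht : 0 ≤ t) :
    prb (fun x => a ≤ f x) ≤ exp (t * expecb f + v * t ^ 2 - t * a) := by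
  have hmarkov : prb (fun x => a ≤ f x) ≤ expecb fun x => exp (-(t * a)) * exp (t * f x) :=
    prb_le_expecb (fun x => by positivity) fun x hx => by
      rw [← exp_add, one_le_exp_iff]
      nlinarith
  rw [expecb_const_mul, ← exp_log (expecb_pos fun x => exp_pos (t * f x)), ← exp_add] at hmarkov
  exact hmarkov.trans (exp_le_exp.2 (by linarith [log_expecb_exp_mul_le hcond ht]))

lemma prb_ge_expecb_add_le_exp {f : (Fin n → Fin 2) → ℝ} {v : ℝ} (hv : 0 < v)
    (hcond : ∀ x, ∑ i, (max (f x - f (flipBit x i)) 0) ^ 2 ≤ v) {s : ℝ} (hs : 0 ≤ s) :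
    prb (fun x => expecb f + s ≤ f x) ≤ exp (-(s ^ 2 / (4 * v))) := by
  convert prb_ge_le_exp hcond (expecb f + s) (t := s / (2 * v)) (by positivity) using 2
  field_simp
  ring

end Concentration

section Clamp

variable {n : ℕ}

lemma neg_exp_neg_one_le_mul_log {u : ℝ} (hu : 0 ≤ u) : -exp (-1) ≤ u * log u := by
  rcases hu.eq_or_lt with rfl | hu
  · simp [(exp_pos _).le]
  · have := mul_exp_neg_le_exp_neg_one (-log u)
    rw [neg_neg, exp_log hu] at this
    linarith

lemma mul_neg_log_le_mul_neg_log {a T b : ℝ} (ha : 0 ≤ a) (haT : a ≤ T) (hTb : T ≤ b)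
    (hb : b ≤ 1) : a * -log b ≤ T * -log T := by
  rcases (ha.trans haT).eq_or_lt with rfl | hT
  · simp [le_antisymm haT ha]
  have hlog : 0 ≤ -log b := neg_nonneg.2 (log_nonpos (hT.le.trans hTb) hb)
  calc a * -log b ≤ T * -log b := mul_le_mul_of_nonneg_right haT hlog
    _ ≤ T * -log T := mul_le_mul_of_nonneg_left (neg_le_neg (log_le_log hT hTb)) hT.le

lemma max_clamp_sub_le (s t : ℝ) :
    max (max 0 (min s 1) - max 0 (min t 1)) 0 ≤ max (s - t) 0 := by
  rcases le_total t s with h | h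
  · refine max_le_max ?_ le_rfl
    calc _ ≤ max (0 - 0) (min s 1 - min t 1) := max_sub_max_le_max _ _ _ _
      _ ≤ s - t := by
        refine max_le (by linarith) ((le_abs_self _).trans ?_)
        exact (abs_min_sub_min_le_max s 1 t 1).trans_eq (by simp [abs_of_nonneg (sub_nonneg.2 h), h])
  · rw [max_eq_right (sub_nonpos.2 (max_le_max le_rfl (min_le_min_right 1 h)))]
    exact le_max_right _ _

/-- The entropy inequality for the square of `x ↦ max 0 (min (f x - K) 1)`, a function that
is `1` on `{K + 1 ≤ f}` and vanishes off `{K < f}`. -/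
lemma prb_add_one_le_mul_neg_log_le {f : (Fin n → Fin 2) → ℝ} {v : ℝ}
    (hcond : ∀ x, ∑ i, (max (f x - f (flipBit x i)) 0) ^ 2 ≤ v) (K : ℝ) :
    prb (fun x => K + 1 ≤ f x) * -log (prb fun x => K < f x) ≤
      (2 * v + exp (-1)) * prb fun x => K < f x := by
  set g : (Fin n → Fin 2) → ℝ := fun x => max 0 (min (f x - K) 1)
  have hg0 (x) : 0 ≤ g x := le_max_left _ _
  have hg1 (x) : g x ≤ 1 := max_le zero_le_one (min_le_right _ _)
  have hg_of_le (x) (hx : K + 1 ≤ f x) : g x = 1 := by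
    simp only [g]
    rw [min_eq_right (by linarith), max_eq_right zero_le_one]
  have hg_of_not_lt (x) (hx : ¬K < f x) : g x = 0 :=
    max_eq_left (le_trans (min_le_left _ _) (by linarith))
  set T := expecb fun x => g x ^ 2
  have haT : prb (fun x => K + 1 ≤ f x) ≤ T :=
    prb_le_expecb (fun x => sq_nonneg _) fun x hx => by rw [hg_of_le x hx, one_pow]
  have hTb : T ≤ prb fun x => K < f x := by
    rw [prb_eq_expecb]
    refine expecb_mono fun x => ?_
    split_ifs with hx
    · nlinarith [hg0 x, hg1 x]
    · simp [hg_of_not_lt x hx]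
  have hgrad : entb (fun x => g x ^ 2) ≤ 2 * v * prb fun x => K < f x := by
    rw [prb_eq_expecb, mul_assoc, ← expecb_const_mul]
    refine (entb_sq_le g).trans (mul_le_mul_of_nonneg_left (expecb_mono fun x => ?_) zero_le_two)
    split_ifs with hx
    · refine le_trans (Finset.sum_le_sum fun i _ => ?_) ((hcond x).trans_eq (mul_one v).symm)
      refine pow_le_pow_left₀ (le_max_right _ _) ((max_clamp_sub_le _ _).trans_eq ?_) 2
      rw [sub_sub_sub_cancel_right]
    · simp [hg_of_not_lt x hx, hg0]
  have hφ : -exp (-1) * prb (fun x => K < f x) ≤ expecb fun x => g x ^ 2 * log (g x ^ 2) := by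
    rw [prb_eq_expecb, ← expecb_const_mul]
    refine expecb_mono fun x => ?_
    split_ifs with hx
    · simpa using neg_exp_neg_one_le_mul_log (sq_nonneg (g x))
    · simp [hg_of_not_lt x hx]
  have hTlog : T * -log T ≤ (2 * v + exp (-1)) * prb fun x => K < f x := by
    simp only [entb] at hgrad
    linarith
  exact (mul_neg_log_le_mul_neg_log (by rw [prb]; positivity) haT hTb (prb_le_one _)).trans hTlog

end Clamp

section LevelSets

variable {n : ℕ}

lemma exp_neg_inv_four_mul_le {v : ℝ} (hv : 0 < v) (hv30 : v ≤ 1 / 30) :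
    exp (-(1 / (4 * v))) ≤ v / 2 := by
  set y := 1 / (4 * v)
  have hy : 15 / 2 ≤ y := by
    rw [le_div_iff₀ (by positivity)]
    linarith
  rw [exp_neg, inv_le_comm₀ (exp_pos _) (by positivity)]
  calc (v / 2)⁻¹ = 8 * y := by simp only [y]; field_simp; norm_num
    _ ≤ y ^ 3 / (Nat.factorial 3) := by
      norm_num [Nat.factorial]
      nlinarith [mul_nonneg (by linarith : (0 : ℝ) ≤ y) (by nlinarith : (0 : ℝ) ≤ y ^ 2 - 48)]
    _ ≤ exp y := pow_div_factorial_le_exp _ (by linarith) 3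

lemma two_mul_le_of_mul_neg_log_le {a b c : ℝ} (ha : 0 ≤ a) (hab : a ≤ b) (hc : 0 < c)
    (h : a * -log b ≤ c * b) (hb : b ≤ exp (-(2 * c))) : 2 * a ≤ b := by
  rcases (ha.trans hab).eq_or_lt with hb0 | hb0
  · linarith [le_antisymm (hb0 ▸ hab) ha]
  have hlog : 2 * c ≤ -log b := by
    have := log_le_log hb0 hb
    rw [log_exp] at this
    linarith
  nlinarith

theorem two_mul_prb_add_one_le {f : (Fin n → Fin 2) → ℝ} {v : ℝ} (hv : 0 < v)
    (hcond : ∀ x, ∑ i, (max (f x - f (flipBit x i)) 0) ^ 2 ≤ v) {K : ℝ}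
    (hK : expecb f + 25 / √5 * v ≤ K) :
    2 * prb (fun x => K + 1 ≤ f x) ≤ prb fun x => K ≤ f x := by
  set s := K - expecb f
  have hs : 25 / √5 * v ≤ s := by linarith
  have hs0 : 0 ≤ s := le_trans (by positivity) hs
  have hs2 : 125 * v ^ 2 ≤ s ^ 2 := by
    have h := pow_le_pow_left₀ (by positivity) hs 2
    rwa [mul_pow, div_pow, sq_sqrt (by norm_num : (0 : ℝ) ≤ 5), show (25 : ℝ) ^ 2 / 5 = 125 by
      norm_num] at h
  have hb : (prb fun x => K ≤ f x) ≤ exp (-(125 * v / 4)) := by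
    refine le_of_eq_of_le (by simp [s]) ((prb_ge_expecb_add_le_exp hv hcond hs0).trans ?_)
    rw [exp_le_exp, neg_le_neg_iff, le_div_iff₀ (by positivity)]
    nlinarith
  have ha : prb (fun x => K + 1 ≤ f x) ≤ exp (-(1 / (4 * v))) := by
    refine le_of_eq_of_le (by congr! 3; simp only [s]; ring)
      ((prb_ge_expecb_add_le_exp hv hcond (by linarith : 0 ≤ s + 1)).trans ?_)
    rw [exp_le_exp, neg_le_neg_iff]
    exact div_le_div_of_nonneg_right (by nlinarith) (by positivity)
  have hab : prb (fun x => K + 1 ≤ f x) ≤ prb fun x => K < f x := prb_mono fun x hx => by linarith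
  have hbb : (prb fun x => K < f x) ≤ prb fun x => K ≤ f x := prb_mono fun x hx => hx.le
  have he : exp (-1) < 0.37 := by
    rw [exp_neg, inv_lt_comm₀ (exp_pos 1) (by norm_num)]
    linarith [exp_one_gt_d9]
  by_cases hsmall : v ≤ 1 / 30 ∧ v ≤ prb fun x => K ≤ f x
  · linarith [exp_neg_inv_four_mul_le hv hsmall.1]
  refine le_trans ?_ hbb
  refine two_mul_le_of_mul_neg_log_le (by rw [prb]; positivity) hab (by positivity)
    (prb_add_one_le_mul_neg_log_le hcond K) ?_
  rcases le_or_gt v (1 / 30) with hv30 | hv30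
  · have := add_one_le_exp (-(2 * (2 * v + exp (-1))))
    linarith [not_and.1 hsmall hv30]
  · exact hbb.trans (hb.trans (exp_le_exp.2 (by linarith)))

end LevelSets

theorem stmt_5 {n : ℕ} (f : (Fin n → Fin 2) → ℝ) (v : ℝ) (hv : 0 < v)
    (hcond : ∀ x, ∑ i, (max (f x - f (flipBit x i)) 0) ^ 2 ≤ v)
    (q : ℤ → ℝ) (hq : ∀ j, q j = prb fun x => (j : ℝ) ≤ f x ∧ f x < (j : ℝ) + 1)
    (k : ℤ) (hk : expecb f + (25 / Real.sqrt 5) * v ≤ (k : ℝ)) :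
    q (k + 1) ≤ q k := by
  have hqk : q k = prb (fun x => (k : ℝ) ≤ f x) - prb fun x => (k : ℝ) + 1 ≤ f x := by
    rw [hq, prb_sub_prb_of_imp fun x hx => by linarith]
    simp only [not_le]
  have hqk1 : q (k + 1) ≤ prb fun x => (k : ℝ) + 1 ≤ f x := by
    rw [hq]
    exact prb_mono fun x hx => by push_cast at hx; exact hx.1
  linarith [two_mul_prb_add_one_le hv hcond hk]
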